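/- arXiv:2404.06849 — 6 statements merged into one kernel-verified Lean document; each statement's English description precedes it below -/
import Mathlib

section
/- Let (V, ‖·‖) be a real normed space, Γ ⊆ V nonempty, z ∈ Γ, γ ∈ (0,1], θ ∈ (0,γ), A > 0, r₀ ∈ [0,A], and δ ∈ [0,1]. Suppose f : Γ → ℝ satisfies |f(x)| ≤ A and |f(y) − f(x)| ≤ A‖y−x‖^γ for all x,y ∈ Γ, and |f(z)| ≤ r₀. Set Ω := {x ∈ Γ : ‖x − z‖ ≤ δ}. Then for all x, y ∈ Ω: |f(x)| ≤ max{(2δ)^{γ−θ} A, min{A, Aδ^γ + r₀ e^δ}} and |f(y) − f(x)| ≤ max{(2δ)^{γ−θ} A, min{A, Aδ^γ + r₀ e^δ}} · ‖y−x‖^θ. -/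
theorem stmt_4 {V : Type*} [NormedAddCommGroup V] [NormedSpace ℝ V]
    (Γ : Set V) (hΓ : Γ.Nonempty) (z : V) (hz : z ∈ Γ) (γ θ A r₀ δ : ℝ)
    (hγ0 : 0 < γ) (hγ1 : γ ≤ 1) (hθ0 : 0 < θ) (hθγ : θ < γ)
    (hA : 0 < A) (hr₀0 : 0 ≤ r₀) (hr₀A : r₀ ≤ A) (hδ0 : 0 ≤ δ) (hδ1 : δ ≤ 1)
    (f : V → ℝ)
    (hbd : ∀ x ∈ Γ, |f x| ≤ A)
    (hhol : ∀ x ∈ Γ, ∀ y ∈ Γ, |f y - f x| ≤ A * ‖y - x‖ ^ γ)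
    (hfz : |f z| ≤ r₀) :
    ∀ x ∈ {x ∈ Γ | ‖x - z‖ ≤ δ}, ∀ y ∈ {x ∈ Γ | ‖x - z‖ ≤ δ},
      |f x| ≤ max ((2 * δ) ^ (γ - θ) * A) (min A (A * δ ^ γ + r₀ * Real.exp δ)) ∧
      |f y - f x| ≤
        max ((2 * δ) ^ (γ - θ) * A) (min A (A * δ ^ γ + r₀ * Real.exp δ)) * ‖y - x‖ ^ θ := by
  rintro x ⟨hxΓ, hxδ⟩ y ⟨hyΓ, hyδ⟩
  constructor
  · refine le_max_of_le_right (le_min (hbd x hxΓ) ?_)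
    calc |f x| ≤ |f x - f z| + |f z| := by
          have := abs_sub_abs_le_abs_sub (f x) (f z)
          have := abs_nonneg (f z); linarith [le_abs_self (f x), abs_abs (f x)]
      _ ≤ A * ‖x - z‖ ^ γ + r₀ := add_le_add (hhol z hz x hxΓ) hfz
      _ ≤ A * δ ^ γ + r₀ * Real.exp δ := by
          have h1 : ‖x - z‖ ^ γ ≤ δ ^ γ :=
            Real.rpow_le_rpow (norm_nonneg _) hxδ hγ0.le
          have h2 : (1:ℝ) ≤ Real.exp δ := Real.one_le_exp hδ0
          nlinarith
  · rcases eq_or_ne (y - x) 0 with h0 | h0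
    · have hxy : y = x := by rwa [sub_eq_zero] at h0
      subst hxy
      simp [Real.zero_rpow hθ0.ne']
    · have hn : 0 < ‖y - x‖ := norm_pos_iff.mpr h0
      have hle : ‖y - x‖ ≤ 2 * δ := by
        calc ‖y - x‖ = ‖(y - z) - (x - z)‖ := by rw [sub_sub_sub_cancel_right]
          _ ≤ ‖y - z‖ + ‖x - z‖ := norm_sub_le _ _
          _ ≤ 2 * δ := by linarith
      calc |f y - f x| ≤ A * ‖y - x‖ ^ γ := hhol x hxΓ y hyΓ
        _ = A * (‖y - x‖ ^ (γ - θ) * ‖y - x‖ ^ θ) := by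
            rw [← Real.rpow_add hn]; ring_nf
        _ ≤ A * ((2 * δ) ^ (γ - θ) * ‖y - x‖ ^ θ) := by
            have hpow : ‖y - x‖ ^ (γ - θ) ≤ (2 * δ) ^ (γ - θ) :=
              Real.rpow_le_rpow (norm_nonneg _) hle (by linarith)
            exact mul_le_mul_of_nonneg_left
              (mul_le_mul_of_nonneg_right hpow (Real.rpow_nonneg (norm_nonneg _) _)) hA.le
        _ = (2 * δ) ^ (γ - θ) * A * ‖y - x‖ ^ θ := by ring
        _ ≤ _ :=
            mul_le_mul_of_nonneg_right (le_max_left _ _) (Real.rpow_nonneg (norm_nonneg _) _)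
end

section
/- Let (V, ‖·‖) be a real normed space, Σ ⊆ V nonempty, γ ∈ (0,1], K₁, K₂ ≥ 0 with K₁ + K₂ > 0, ε > 0, and 0 ≤ ε₀ < min{K₁+K₂, ε}. Let δ₀ > 0 satisfy (K₁+K₂)δ₀^γ + ε₀e^{δ₀} ≤ ε. Suppose B ⊆ Σ is such that every x ∈ Σ lies within distance δ₀ of some point of B. Suppose f, h : Σ → ℝ satisfy: |f(x)| ≤ K₁, |f(y)−f(x)| ≤ K₁‖y−x‖^γ, |h(x)| ≤ K₂, |h(y)−h(x)| ≤ K₂‖y−x‖^γ for all x,y ∈ Σ, and |f(z) − h(z)| ≤ ε₀ for all z ∈ B. Then |f(x) − h(x)| ≤ ε for every x ∈ Σ. -/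
theorem stmt_6 {V : Type*} [NormedAddCommGroup V] [NormedSpace ℝ V]
    (S : Set V) (hS : S.Nonempty) (γ K₁ K₂ ε ε₀ δ₀ : ℝ)
    (hγ0 : 0 < γ) (hγ1 : γ ≤ 1) (hK₁ : 0 ≤ K₁) (hK₂ : 0 ≤ K₂) (hK : 0 < K₁ + K₂)
    (hε : 0 < ε) (hε₀0 : 0 ≤ ε₀) (hε₀ : ε₀ < min (K₁ + K₂) ε)
    (hδ₀ : 0 < δ₀) (hδ₀' : (K₁ + K₂) * δ₀ ^ γ + ε₀ * Real.exp δ₀ ≤ ε)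
    (B : Set V) (hB : B ⊆ S)
    (hcover : ∀ x ∈ S, ∃ z ∈ B, ‖x - z‖ ≤ δ₀)
    (f h : V → ℝ)
    (hfbd : ∀ x ∈ S, |f x| ≤ K₁)
    (hfhol : ∀ x ∈ S, ∀ y ∈ S, |f y - f x| ≤ K₁ * ‖y - x‖ ^ γ)
    (hhbd : ∀ x ∈ S, |h x| ≤ K₂)
    (hhhol : ∀ x ∈ S, ∀ y ∈ S, |h y - h x| ≤ K₂ * ‖y - x‖ ^ γ)
    (hclose : ∀ z ∈ B, |f z - h z| ≤ ε₀) :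
    ∀ x ∈ S, |f x - h x| ≤ ε := by
  intro x hx
  obtain ⟨z, hzB, hzd⟩ := hcover x hx
  have hzS : z ∈ S := hB hzB
  have hnorm : ‖x - z‖ ^ γ ≤ δ₀ ^ γ :=
    Real.rpow_le_rpow (norm_nonneg _) hzd hγ0.le
  have h1 : |f x - f z| ≤ K₁ * δ₀ ^ γ :=
    (hfhol z hzS x hx).trans (by gcongr)
  have h2 : |h x - h z| ≤ K₂ * δ₀ ^ γ :=
    (hhhol z hzS x hx).trans (by gcongr)
  have h3 := hclose z hzB
  have key : |f x - h x| ≤ (K₁ + K₂) * δ₀ ^ γ + ε₀ := by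
    have : f x - h x = (f x - f z) + (f z - h z) - (h x - h z) := by ring
    rw [this]
    calc |(f x - f z) + (f z - h z) - (h x - h z)|
        ≤ |f x - f z| + |f z - h z| + |h x - h z| := by
          exact (abs_sub _ _).trans (by gcongr; exact abs_add_le _ _)
      _ ≤ K₁ * δ₀ ^ γ + ε₀ + K₂ * δ₀ ^ γ := by gcongr
      _ = (K₁ + K₂) * δ₀ ^ γ + ε₀ := by ring
  refine key.trans (le_trans ?_ hδ₀')
  have : ε₀ ≤ ε₀ * Real.exp δ₀ :=
    le_mul_of_one_le_right hε₀0 (Real.one_le_exp hδ₀.le)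
  linarith
end

section
/- Let K₀ > 0 and ε ∈ (0, 2K₀). For every δ > 0 there exist a finite set Σ ⊆ ℝ, a subset B ⊆ Σ with Σ contained in the union of closed δ-balls around points of B, and functions ψ, φ : Σ → ℝ such that: ψ and φ each satisfy the Lipschitz bound |g(y)−g(x)| ≤ K₀|y−x| and |g| ≤ K₀ on Σ, ψ = φ on B, and yet there exist x, y ∈ Σ with |(ψ−φ)(y) − (ψ−φ)(x)| = 2K₀|y−x|; in particular the Lipschitz (Lip(1)) seminorm of ψ − φ on Σ equals 2K₀ > ε. -/
theorem stmt_7 (K₀ ε : ℝ) (hK : 0 < K₀) (hε : 0 < ε) (hε2 : ε < 2 * K₀) :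
    ∀ δ > (0:ℝ), ∃ S : Set ℝ, S.Finite ∧ ∃ B ⊆ S,
      (∀ x ∈ S, ∃ z ∈ B, |x - z| ≤ δ) ∧
      ∃ ψ φ : ℝ → ℝ,
        (∀ x ∈ S, |ψ x| ≤ K₀) ∧
        (∀ x ∈ S, ∀ y ∈ S, |ψ y - ψ x| ≤ K₀ * |y - x|) ∧
        (∀ x ∈ S, |φ x| ≤ K₀) ∧
        (∀ x ∈ S, ∀ y ∈ S, |φ y - φ x| ≤ K₀ * |y - x|) ∧
        (∀ z ∈ B, ψ z = φ z) ∧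
        ∃ x ∈ S, ∃ y ∈ S, x ≠ y ∧
          |(ψ y - φ y) - (ψ x - φ x)| = 2 * K₀ * |y - x| ∧ 2 * K₀ > ε := by
  intro δ hδ
  set t : ℝ := min δ 1 with ht
  have ht0 : 0 < t := lt_min hδ one_pos
  have ht1 : t ≤ 1 := min_le_right _ _
  have htδ : t ≤ δ := min_le_left _ _
  refine ⟨{0, t}, (Set.finite_singleton t).insert 0, {0}, by simp, ?_, fun x => K₀ * x, fun x => -(K₀ * x), ?_, ?_, ?_, ?_, ?_, 0, by simp, t, by simp, ht0.ne, ?_, hε2⟩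
  · intro x hx
    refine ⟨0, rfl, ?_⟩
    rcases hx with rfl | rfl
    · simp [hδ.le]
    · simp [abs_of_pos ht0, htδ]
  · intro x hx
    rcases hx with rfl | rfl
    · simp [hK.le]
    · show |K₀ * t| ≤ K₀
      rw [abs_of_pos (by positivity)]; nlinarith
  · intro x hx y hy
    rw [← mul_sub, abs_mul, abs_of_pos hK]
  · intro x hx
    rcases hx with rfl | rfl
    · simp [hK.le]
    · show |-(K₀ * t)| ≤ K₀
      rw [abs_neg, abs_of_pos (by positivity)]; nlinarith
  · intro x hx y hy
    rw [neg_sub_neg, ← mul_sub, abs_mul, abs_of_pos hK, abs_sub_comm]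
  · intro z hz; simp at hz; simp [hz]
  · have : K₀ * t - -(K₀ * t) - (K₀ * 0 - -(K₀ * 0)) = 2 * K₀ * t := by ring
    rw [this, sub_zero, abs_of_pos ht0, abs_of_pos (by positivity : (0:ℝ) < 2 * K₀ * t)]
end

section
/- Consider ψ⁰ : [−1,1] → ℝ, ψ⁰(x) = x², and ψ¹ : [−1,1] → L(ℝ,ℝ), ψ¹(x)(v) = 2xv. Then: (i) for all x, y ∈ [−1,1], ψ⁰(y) − ψ⁰(x) − ψ¹(x)(y−x) = (y−x)² and |(y−x)²| ≤ 2|y−x|², |ψ¹(y)−ψ¹(x)| = 2|y−x|, |ψ⁰(x)| ≤ 2, |ψ¹(x)| ≤ 2, so the pair has Lip(2)-norm at most 2 on [−1,1]; (ii) the supremum over x ≠ y in [−1,1] of |ψ¹(y) − ψ¹(x)|/|y−x|^{1/2} equals 2√2, so the Lip(3/2)-norm of the pair on [−1,1] is at least √2 times its Lip(2)-norm. -/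
theorem stmt_13 (f g : ℝ → ℝ) (hf : ∀ x, f x = x ^ 2) (hg : ∀ x, g x = 2 * x) :
    (∀ x ∈ Set.Icc (-1:ℝ) 1, ∀ y ∈ Set.Icc (-1:ℝ) 1,
      f y - f x - g x * (y - x) = (y - x) ^ 2 ∧
      |(y - x) ^ 2| ≤ 2 * |y - x| ^ 2 ∧
      |g y - g x| = 2 * |y - x| ∧ |f x| ≤ 2 ∧ |g x| ≤ 2) ∧
    sSup {r : ℝ | ∃ x ∈ Set.Icc (-1:ℝ) 1, ∃ y ∈ Set.Icc (-1:ℝ) 1,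
        x ≠ y ∧ r = |g y - g x| / |y - x| ^ ((1:ℝ)/2)} = 2 * Real.sqrt 2 := by
  constructor
  · intro x hx y hy
    refine ⟨by rw [hf, hf, hg]; ring, ?_, ?_, ?_, ?_⟩
    · rw [abs_of_nonneg (sq_nonneg _), sq_abs]; nlinarith [sq_nonneg (y - x)]
    · rw [hg, hg, show 2 * y - 2 * x = 2 * (y - x) by ring, abs_mul]
      norm_num
    · rw [hf, abs_of_nonneg (sq_nonneg x)]
      nlinarith [hx.1, hx.2]
    · rw [hg, abs_mul]
      rw [abs_of_nonneg (by norm_num : (0:ℝ) ≤ 2)]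
      nlinarith [abs_le.mpr ⟨hx.1, hx.2⟩]
  · apply IsGreatest.csSup_eq
    constructor
    · refine ⟨-1, by norm_num, 1, by norm_num, by norm_num, ?_⟩
      rw [hg, hg]
      have h2 : ((2:ℝ)) ^ ((1:ℝ)/2) = Real.sqrt 2 := (Real.sqrt_eq_rpow 2).symm
      norm_num
      rw [h2]
      rw [eq_div_iff (by positivity)]
      nlinarith [Real.sq_sqrt (by norm_num : (2:ℝ) ≥ 0), Real.sqrt_nonneg 2]
    · rintro r ⟨x, hx, y, hy, hxy, rfl⟩
      rw [hg, hg, show 2 * y - 2 * x = 2 * (y - x) by ring, abs_mul,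
        abs_of_nonneg (by norm_num : (0:ℝ) ≤ 2)]
      have hd : (0:ℝ) < |y - x| := abs_pos.mpr (sub_ne_zero.mpr (Ne.symm hxy))
      have key : |y - x| = |y - x| ^ ((1:ℝ)/2) * |y - x| ^ ((1:ℝ)/2) := by
        rw [← Real.rpow_add hd]
        norm_num
      rw [div_le_iff₀ (by positivity)]
      calc 2 * |y - x| = 2 * (|y - x| ^ ((1:ℝ)/2) * |y - x| ^ ((1:ℝ)/2)) := by rw [← key]
        _ ≤ 2 * (Real.sqrt 2 * |y - x| ^ ((1:ℝ)/2)) := by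
            have h1 : |y - x| ≤ 2 := by
              have := abs_sub_abs_le_abs_sub y x
              have hy' := abs_le.mpr ⟨hy.1, hy.2⟩
              have hx' := abs_le.mpr ⟨hx.1, hx.2⟩
              calc |y - x| ≤ |y| + |x| := abs_sub y x
                _ ≤ 2 := by linarith
            have h2 : |y - x| ^ ((1:ℝ)/2) ≤ (2:ℝ) ^ ((1:ℝ)/2) :=
              Real.rpow_le_rpow (abs_nonneg _) h1 (by norm_num)
            have h3 : ((2:ℝ)) ^ ((1:ℝ)/2) = Real.sqrt 2 := (Real.sqrt_eq_rpow 2).symm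
            rw [h3] at h2
            have := Real.rpow_nonneg (abs_nonneg (y - x)) ((1:ℝ)/2)
            nlinarith
        _ = 2 * Real.sqrt 2 * |y - x| ^ ((1:ℝ)/2) := by ring
end

section
/- Let (V,‖·‖) be a real normed space, Σ ⊆ V, η ∈ (0,1], δ₀ > 0, c ≥ 0, ε₀ ≥ 0, and B ⊆ Σ such that every point of Σ is within distance δ₀ of some point of B. Suppose F : Σ → ℝ satisfies: (a) |F(z)| ≤ ε₀ for all z ∈ B; (b) for every z ∈ B and all x, y ∈ Σ with ‖x−z‖ ≤ 2δ₀ and ‖y−z‖ ≤ 2δ₀, |F(x)| ≤ c and |F(x) − F(y)| ≤ c‖x−y‖^η. Then for all p, w ∈ Σ: |F(w) − F(p)| ≤ (2c + 2ε₀·e·(1+e)·δ₀^{−η})·‖w − p‖^η. -/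
theorem stmt_16 {V : Type*} [NormedAddCommGroup V] [NormedSpace ℝ V]
    (S : Set V) (η δ₀ c ε₀ : ℝ)
    (hη0 : 0 < η) (hη1 : η ≤ 1) (hδ₀ : 0 < δ₀) (hc : 0 ≤ c) (hε₀ : 0 ≤ ε₀)
    (B : Set V) (hB : B ⊆ S)
    (hcover : ∀ x ∈ S, ∃ z ∈ B, ‖x - z‖ ≤ δ₀)
    (F : V → ℝ)
    (ha : ∀ z ∈ B, |F z| ≤ ε₀)
    (hb : ∀ z ∈ B, ∀ x ∈ S, ∀ y ∈ S, ‖x - z‖ ≤ 2 * δ₀ → ‖y - z‖ ≤ 2 * δ₀ →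
      |F x| ≤ c ∧ |F x - F y| ≤ c * ‖x - y‖ ^ η) :
    ∀ p ∈ S, ∀ w ∈ S,
      |F w - F p| ≤
        (2 * c + 2 * ε₀ * Real.exp 1 * (1 + Real.exp 1) * δ₀ ^ (-η)) * ‖w - p‖ ^ η := by
  intro p hp w hw
  have he : (1:ℝ) ≤ Real.exp 1 * (1 + Real.exp 1) := by
    nlinarith [Real.exp_one_gt_d9, Real.exp_pos 1]
  have hKnn : 0 ≤ 2 * ε₀ * Real.exp 1 * (1 + Real.exp 1) * δ₀ ^ (-η) := by
    positivity
  by_cases hd : ‖w - p‖ ≤ δ₀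
  · -- local case
    obtain ⟨z, hzB, hpz⟩ := hcover p hp
    have hwz : ‖w - z‖ ≤ 2 * δ₀ := by
      calc ‖w - z‖ = ‖(w - p) + (p - z)‖ := by rw [sub_add_sub_cancel]
        _ ≤ ‖w - p‖ + ‖p - z‖ := norm_add_le _ _
        _ ≤ 2 * δ₀ := by linarith
    have h := (hb z hzB w hw p hp hwz (by linarith)).2
    refine h.trans ?_
    have hnn : 0 ≤ ‖w - p‖ ^ η := Real.rpow_nonneg (norm_nonneg _) η
    nlinarith
  · -- far case
    push_neg at hd
    obtain ⟨z, hzB, hpz⟩ := hcover p hp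
    obtain ⟨z', hz'B, hwz'⟩ := hcover w hw
    have hFp : |F p| ≤ c * δ₀ ^ η + ε₀ := by
      have h := (hb z hzB p hp z (hB hzB) (by linarith) (by simp only [sub_self, norm_zero]; linarith)).2
      have h2 := ha z hzB
      have habs : |F p| ≤ |F p - F z| + |F z| := by
        calc |F p| = |(F p - F z) + F z| := by ring_nf
          _ ≤ |F p - F z| + |F z| := abs_add_le _ _
      have hmono : ‖p - z‖ ^ η ≤ δ₀ ^ η :=
        Real.rpow_le_rpow (norm_nonneg _) hpz hη0.le
      nlinarith
    have hFw : |F w| ≤ c * δ₀ ^ η + ε₀ := by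
      have h := (hb z' hz'B w hw z' (hB hz'B) (by linarith) (by simp only [sub_self, norm_zero]; linarith)).2
      have h2 := ha z' hz'B
      have habs : |F w| ≤ |F w - F z'| + |F z'| := by
        calc |F w| = |(F w - F z') + F z'| := by ring_nf
          _ ≤ |F w - F z'| + |F z'| := abs_add_le _ _
      have hmono : ‖w - z'‖ ^ η ≤ δ₀ ^ η :=
        Real.rpow_le_rpow (norm_nonneg _) hwz' hη0.le
      nlinarith
    have htri : |F w - F p| ≤ |F w| + |F p| := abs_sub _ _
    have hpow : δ₀ ^ η ≤ ‖w - p‖ ^ η :=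
      Real.rpow_le_rpow hδ₀.le hd.le hη0.le
    have hinv : δ₀ ^ (-η) * δ₀ ^ η = 1 := by
      rw [← Real.rpow_add hδ₀]; simp
    have hδη : 0 < δ₀ ^ η := Real.rpow_pos_of_pos hδ₀ η
    -- RHS ≥ 2c δ₀^η + 2ε₀ e(1+e)
    have key : 2 * c * δ₀ ^ η + 2 * ε₀ ≤
        (2 * c + 2 * ε₀ * Real.exp 1 * (1 + Real.exp 1) * δ₀ ^ (-η)) * ‖w - p‖ ^ η := by
      have h1 : (2 * c + 2 * ε₀ * Real.exp 1 * (1 + Real.exp 1) * δ₀ ^ (-η)) * δ₀ ^ η ≤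
          (2 * c + 2 * ε₀ * Real.exp 1 * (1 + Real.exp 1) * δ₀ ^ (-η)) * ‖w - p‖ ^ η := by
        apply mul_le_mul_of_nonneg_left hpow
        nlinarith
      have h2 : 2 * c * δ₀ ^ η + 2 * ε₀ ≤
          (2 * c + 2 * ε₀ * Real.exp 1 * (1 + Real.exp 1) * δ₀ ^ (-η)) * δ₀ ^ η := by
        have : (2 * c + 2 * ε₀ * Real.exp 1 * (1 + Real.exp 1) * δ₀ ^ (-η)) * δ₀ ^ η
            = 2 * c * δ₀ ^ η + 2 * ε₀ * (Real.exp 1 * (1 + Real.exp 1)) * (δ₀ ^ (-η) * δ₀ ^ η) := by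
          ring
        rw [this, hinv]
        nlinarith
      linarith
    linarith
end

section
/- Let (V,‖·‖) be a real normed space, Σ ⊆ V nonempty, p ∈ Σ, γ ∈ (0,1], η ∈ (0,γ), K₁,K₂ ≥ 0 with K := K₁+K₂ > 0, ε > 0, 0 ≤ ε₀ < min{K, ε}. Suppose δ₀ ∈ (0,1] satisfies both K(2δ₀)^{γ−η} ≤ min{K,ε} and Kδ₀^γ + ε₀e^{δ₀} ≤ min{K,ε}. Let f, h : Σ → ℝ satisfy |f(x)| ≤ K₁, |f(y)−f(x)| ≤ K₁‖y−x‖^γ, |h(x)| ≤ K₂, |h(y)−h(x)| ≤ K₂‖y−x‖^γ (all x,y ∈ Σ), and |f(p) − h(p)| ≤ ε₀. Set Ω := {x ∈ Σ : ‖x − p‖ ≤ δ₀}. Then |f(x) − h(x)| ≤ ε for all x ∈ Ω, and |(f−h)(y) − (f−h)(x)| ≤ ε‖y−x‖^η for all x, y ∈ Ω. -/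
theorem stmt_17 {V : Type*} [NormedAddCommGroup V] [NormedSpace ℝ V]
    (S : Set V) (hS : S.Nonempty) (p : V) (hp : p ∈ S)
    (γ η K₁ K₂ ε ε₀ δ₀ : ℝ)
    (hγ0 : 0 < γ) (hγ1 : γ ≤ 1) (hη0 : 0 < η) (hηγ : η < γ)
    (hK₁ : 0 ≤ K₁) (hK₂ : 0 ≤ K₂) (hK : 0 < K₁ + K₂)
    (hε : 0 < ε) (hε₀0 : 0 ≤ ε₀) (hε₀ : ε₀ < min (K₁ + K₂) ε)
    (hδ₀0 : 0 < δ₀) (hδ₀1 : δ₀ ≤ 1)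
    (hδ₀a : (K₁ + K₂) * (2 * δ₀) ^ (γ - η) ≤ min (K₁ + K₂) ε)
    (hδ₀b : (K₁ + K₂) * δ₀ ^ γ + ε₀ * Real.exp δ₀ ≤ min (K₁ + K₂) ε)
    (f h : V → ℝ)
    (hfbd : ∀ x ∈ S, |f x| ≤ K₁)
    (hfhol : ∀ x ∈ S, ∀ y ∈ S, |f y - f x| ≤ K₁ * ‖y - x‖ ^ γ)
    (hhbd : ∀ x ∈ S, |h x| ≤ K₂)
    (hhhol : ∀ x ∈ S, ∀ y ∈ S, |h y - h x| ≤ K₂ * ‖y - x‖ ^ γ)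
    (hclose : |f p - h p| ≤ ε₀) :
    (∀ x ∈ {x ∈ S | ‖x - p‖ ≤ δ₀}, |f x - h x| ≤ ε) ∧
    (∀ x ∈ {x ∈ S | ‖x - p‖ ≤ δ₀}, ∀ y ∈ {x ∈ S | ‖x - p‖ ≤ δ₀},
      |(f y - h y) - (f x - h x)| ≤ ε * ‖y - x‖ ^ η) := by
  have hFhol : ∀ x ∈ S, ∀ y ∈ S,
      |(f y - h y) - (f x - h x)| ≤ (K₁ + K₂) * ‖y - x‖ ^ γ := by
    intro x hx y hy
    have h1 := hfhol x hx y hy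
    have h2 := hhhol x hx y hy
    calc |(f y - h y) - (f x - h x)| = |(f y - f x) - (h y - h x)| := by ring_nf
      _ ≤ |f y - f x| + |h y - h x| := abs_sub _ _
      _ ≤ K₁ * ‖y - x‖ ^ γ + K₂ * ‖y - x‖ ^ γ := add_le_add h1 h2
      _ = (K₁ + K₂) * ‖y - x‖ ^ γ := by ring
  constructor
  · rintro x ⟨hxS, hxd⟩
    have h1 := hFhol p hp x hxS
    have hpow : ‖x - p‖ ^ γ ≤ δ₀ ^ γ :=
      Real.rpow_le_rpow (norm_nonneg _) hxd hγ0.le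
    have hexp : ε₀ ≤ ε₀ * Real.exp δ₀ := by
      nlinarith [Real.one_le_exp hδ₀0.le]
    calc |f x - h x| ≤ |(f x - h x) - (f p - h p)| + |f p - h p| := by
          have := abs_sub_abs_le_abs_sub (f x - h x) (f p - h p)
          have := abs_add_le ((f x - h x) - (f p - h p)) (f p - h p)
          simpa using this.trans_eq' (by ring_nf)
      _ ≤ (K₁ + K₂) * ‖x - p‖ ^ γ + ε₀ := add_le_add h1 hclose
      _ ≤ (K₁ + K₂) * δ₀ ^ γ + ε₀ * Real.exp δ₀ := by
          have := mul_le_mul_of_nonneg_left hpow hK.le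
          linarith
      _ ≤ min (K₁ + K₂) ε := hδ₀b
      _ ≤ ε := min_le_right _ _
  · rintro x ⟨hxS, hxd⟩ y ⟨hyS, hyd⟩
    have hd : ‖y - x‖ ≤ 2 * δ₀ := by
      have : ‖y - x‖ ≤ ‖y - p‖ + ‖x - p‖ := by
        have := norm_sub_le (y - p) (x - p)
        simpa using this
      linarith
    have h1 := hFhol x hxS y hyS
    have hsplit : ‖y - x‖ ^ γ = ‖y - x‖ ^ (γ - η) * ‖y - x‖ ^ η := by
      rw [← Real.rpow_add' (norm_nonneg _)] <;> ring_nf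
      positivity
    have hpow : ‖y - x‖ ^ (γ - η) ≤ (2 * δ₀) ^ (γ - η) :=
      Real.rpow_le_rpow (norm_nonneg _) hd (by linarith)
    have hη : (0:ℝ) ≤ ‖y - x‖ ^ η := Real.rpow_nonneg (norm_nonneg _) _
    calc |(f y - h y) - (f x - h x)| ≤ (K₁ + K₂) * ‖y - x‖ ^ γ := h1
      _ = (K₁ + K₂) * ‖y - x‖ ^ (γ - η) * ‖y - x‖ ^ η := by rw [hsplit]; ring
      _ ≤ (K₁ + K₂) * (2 * δ₀) ^ (γ - η) * ‖y - x‖ ^ η := by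
          apply mul_le_mul_of_nonneg_right _ hη
          exact mul_le_mul_of_nonneg_left hpow hK.le
      _ ≤ ε * ‖y - x‖ ^ η := by
          apply mul_le_mul_of_nonneg_right _ hη
          exact hδ₀a.trans (min_le_right _ _)
end
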